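/- arXiv:2306.02338 — 3 statements merged into one kernel-verified Lean document; each statement's English description precedes it below -/
import Mathlib

section
/- Let G = (V, E) be a finite simple undirected graph with V nonempty and let k ≥ 1 be an integer. Form the graph G' = (V ∪ D, E) by adding a set D of k new isolated vertices (disjoint from V); color every vertex of V with one color and every vertex of D with a second color, and set α = 1/2. Then max{ d_{G'}(S) : ∅ ≠ S ⊆ V ∪ D, α(S) ≤ 1/2 } = (1/2) · max{ d_G(T) : ∅ ≠ T ⊆ V, |T| ≤ k } (so this DDSP instance exactly encodes the densest at-most-k-subgraph problem on G, with optimal value halved). -/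
/-!
A set `S ⊆ V ∪ D` satisfies `α(S) ≤ 1/2` exactly when it has as many dummy vertices as original
ones; as the dummies are isolated, its density is then `d_G(S ∩ V) / 2`, and `|S ∩ V| = |S ∩ D| ≤ k`.
Conversely every `T ⊆ V` with `|T| ≤ k` can be padded with `|T|` dummies. So the attainable
densities of the two problems differ exactly by the factor `1/2`, which passes through `sSup`.
-/

open Finset

/-- The set of edges of `G` with both endpoints in `S`. -/
def edgesIn {V : Type*} [Fintype V] [DecidableEq V] (G : SimpleGraph V) [DecidableRel G.Adj]
    (S : Finset V) : Finset (Sym2 V) :=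
  G.edgeFinset.filter (fun e => ∀ v ∈ e, v ∈ S)

/-- The (degree) density `d(S) = |E(S)|/|S|`. -/
noncomputable def density {V : Type*} [Fintype V] [DecidableEq V] (G : SimpleGraph V)
    [DecidableRel G.Adj] (S : Finset V) : ℝ :=
  ((edgesIn G S).card : ℝ) / S.card

/-- `S_c`, the set of nodes of `S` with color `c`. -/
def colorClass {V C : Type*} [DecidableEq V] [DecidableEq C] (ℓ : V → C) (S : Finset V) (c : C) :
    Finset V := S.filter (fun v => ℓ v = c)

/-- `c_max(S)`, the maximum number of nodes of `S` sharing a single color. -/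
def cmax {V C : Type*} [DecidableEq V] [Fintype C] [DecidableEq C] (ℓ : V → C) (S : Finset V) : ℕ :=
  Finset.univ.sup (fun c => (colorClass ℓ S c).card)

/-- `α(S) = c_max(S)/|S|`, the maximum fraction of monochromatic nodes in `S`. -/
noncomputable def alphaOf {V C : Type*} [DecidableEq V] [Fintype C] [DecidableEq C]
    (ℓ : V → C) (S : Finset V) : ℝ := (cmax ℓ S : ℝ) / S.card

/-- The graph `G' = (V ∪ D, E)` obtained from `G` by adding `k` new isolated vertices:
the vertex set is `V ⊕ Fin k` and the edge set is unchanged. -/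
def extendGraph {V : Type*} (G : SimpleGraph V) (k : ℕ) : SimpleGraph (V ⊕ Fin k) where
  Adj a b := ∃ u v, a = Sum.inl u ∧ b = Sum.inl v ∧ G.Adj u v
  symm := by constructor; rintro a b ⟨u, v, rfl, rfl, h⟩; exact ⟨v, u, rfl, rfl, h.symm⟩
  loopless := by
    constructor
    rintro a ⟨u, v, rfl, h, hadj⟩
    rw [Sum.inl.injEq] at h
    subst h
    exact G.loopless.irrefl u hadj

noncomputable instance {V : Type*} (G : SimpleGraph V) (k : ℕ) :
    DecidableRel (extendGraph G k).Adj := Classical.decRel _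

open scoped Pointwise

section Coloring

variable {V W : Type*} [DecidableEq V] [DecidableEq W]

lemma cmax_isRight (S : Finset (V ⊕ W)) : cmax Sum.isRight S = max #S.toLeft #S.toRight := by
  have hleft : colorClass Sum.isRight S false = S.toLeft.map Function.Embedding.inl := by
    ext x; cases x <;> simp [colorClass]
  have hright : colorClass Sum.isRight S true = S.toRight.map Function.Embedding.inr := by
    ext x; cases x <;> simp [colorClass]
  rw [cmax, Fintype.univ_bool, sup_insert, sup_singleton, hleft, hright, card_map, card_map,
    max_comm]

lemma alphaOf_isRight_le_half_iff (S : Finset (V ⊕ W)) :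
    alphaOf Sum.isRight S ≤ 1 / 2 ↔ #S.toLeft = #S.toRight := by
  have hcard : #S.toLeft + #S.toRight = #S := card_toLeft_add_card_toRight
  rcases (#S).eq_zero_or_pos with hS | hS
  · simp only [alphaOf, hS, Nat.cast_zero, div_zero]
    exact ⟨fun _ => by omega, fun _ => by norm_num⟩
  · rw [alphaOf, div_le_div_iff₀ (by exact_mod_cast hS) two_pos, one_mul, cmax_isRight,
      ← hcard]
    norm_cast
    omega

end Coloring

section ExtendGraph

variable {V : Type*} [Fintype V] [DecidableEq V] (G : SimpleGraph V) [DecidableRel G.Adj] (k : ℕ)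

lemma edgesIn_extendGraph (S : Finset (V ⊕ Fin k)) :
    edgesIn (extendGraph G k) S =
      (edgesIn G S.toLeft).map ⟨Sym2.map Sum.inl, Sym2.map.injective Sum.inl_injective⟩ := by
  ext e
  induction e using Sym2.ind with
  | _ a b =>
    simp only [edgesIn, mem_filter, Finset.mem_map, SimpleGraph.mem_edgeFinset,
      SimpleGraph.mem_edgeSet, Function.Embedding.coeFn_mk, Sym2.mem_iff]
    constructor
    · rintro ⟨⟨u, v, rfl, rfl, huv⟩, hmem⟩
      refine ⟨s(u, v), ⟨huv, fun x hx => ?_⟩, Sym2.map_mk _ _ _⟩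
      rcases Sym2.mem_iff.1 hx with rfl | rfl
      · exact mem_toLeft.2 (hmem _ (Or.inl rfl))
      · exact mem_toLeft.2 (hmem _ (Or.inr rfl))
    · rintro ⟨e', ⟨he', hmem⟩, heq⟩
      induction e' using Sym2.ind with
      | _ u v =>
        rw [SimpleGraph.mem_edgeSet] at he'
        rw [Sym2.map_mk, Sym2.eq_iff] at heq
        have hu : Sum.inl u ∈ S := mem_toLeft.1 (hmem u (by simp))
        have hv : Sum.inl v ∈ S := mem_toLeft.1 (hmem v (by simp))
        rcases heq with ⟨rfl, rfl⟩ | ⟨rfl, rfl⟩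
        · exact ⟨⟨u, v, rfl, rfl, he'⟩, by rintro x (rfl | rfl) <;> assumption⟩
        · exact ⟨⟨v, u, rfl, rfl, he'.symm⟩, by rintro x (rfl | rfl) <;> assumption⟩

lemma density_extendGraph_of_card_toLeft_eq {S : Finset (V ⊕ Fin k)}
    (h : #S.toLeft = #S.toRight) : density (extendGraph G k) S = density G S.toLeft / 2 := by
  have hcard : (#S : ℝ) = 2 * #S.toLeft := by
    rw [← card_toLeft_add_card_toRight (u := S), ← h]; push_cast; ring
  rw [density, density, edgesIn_extendGraph, card_map, hcard, div_div, mul_comm]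

lemma densities_alphaOf_le_half_extendGraph_eq :
    {x : ℝ | ∃ S : Finset (V ⊕ Fin k), S.Nonempty ∧ alphaOf Sum.isRight S ≤ 1 / 2 ∧
        density (extendGraph G k) S = x}
      = (1 / 2 : ℝ) • {x : ℝ | ∃ T : Finset V, T.Nonempty ∧ #T ≤ k ∧ density G T = x} := by
  ext x
  simp only [Set.mem_smul_set, Set.mem_ofPred_eq, smul_eq_mul, alphaOf_isRight_le_half_iff]
  constructor
  · rintro ⟨S, hSne, hbal, rfl⟩
    have hleft : S.toLeft.Nonempty := by
      rw [← card_pos] at hSne ⊢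
      have := card_toLeft_add_card_toRight (u := S)
      omega
    have hk : #S.toLeft ≤ k := hbal ▸ (card_le_univ S.toRight).trans_eq (Fintype.card_fin k)
    refine ⟨_, ⟨S.toLeft, hleft, hk, rfl⟩, ?_⟩
    rw [density_extendGraph_of_card_toLeft_eq G k hbal]
    ring
  · rintro ⟨_, ⟨T, hTne, hTk, rfl⟩, rfl⟩
    obtain ⟨D, -, hD⟩ := exists_subset_card_eq (s := (univ : Finset (Fin k)))
      (n := #T) (by simpa using hTk)
    have hbal : #(T.disjSum D).toLeft = #(T.disjSum D).toRight := by
      rw [toLeft_disjSum, toRight_disjSum, hD]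
    have hne : (T.disjSum D).Nonempty :=
      let ⟨v, hv⟩ := hTne; ⟨Sum.inl v, inl_mem_disjSum.2 hv⟩
    refine ⟨T.disjSum D, hne, hbal, ?_⟩
    rw [density_extendGraph_of_card_toLeft_eq G k hbal, toLeft_disjSum]
    ring

end ExtendGraph

theorem stmt1_general {V : Type*} [Fintype V] [DecidableEq V]
    (G : SimpleGraph V) [DecidableRel G.Adj] (k : ℕ) :
    sSup {x : ℝ | ∃ S : Finset (V ⊕ Fin k), S.Nonempty ∧
        alphaOf (Sum.elim (fun _ => (false : Bool)) (fun _ => (true : Bool))) S ≤ 1 / 2 ∧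
        density (extendGraph G k) S = x}
      = (1 / 2) *
        sSup {x : ℝ | ∃ T : Finset V, T.Nonempty ∧ T.card ≤ k ∧ density G T = x} := by
  have hcolor : Sum.elim (fun _ => false) (fun _ => true) = (Sum.isRight : V ⊕ Fin k → Bool) := by
    ext (_ | _) <;> rfl
  rw [hcolor, densities_alphaOf_le_half_extendGraph_eq, Real.sSup_smul_of_nonneg (by norm_num), smul_eq_mul]

/-- Adding `k` isolated dummy nodes of a second color and setting `α = 1/2` encodes the densest
at-most-`k`-subgraph problem: the optimal DDSP value on `G'` is half the optimal DamkS value. -/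
theorem stmt1 {V : Type*} [Fintype V] [DecidableEq V] [Nonempty V]
    (G : SimpleGraph V) [DecidableRel G.Adj] (k : ℕ) (hk : 1 ≤ k) :
    sSup {x : ℝ | ∃ S : Finset (V ⊕ Fin k), S.Nonempty ∧
        alphaOf (Sum.elim (fun _ => (false : Bool)) (fun _ => (true : Bool))) S ≤ 1 / 2 ∧
        density (extendGraph G k) S = x}
      = (1 / 2) *
        sSup {x : ℝ | ∃ T : Finset V, T.Nonempty ∧ T.card ≤ k ∧ density G T = x} :=
  stmt1_general G k
end

section
/- Let G = (V, E) be a finite simple undirected graph, ℓ : V → C a coloring, and k⃗ = (k_c)_{c∈C} a vector of nonnegative integers with k_c ≤ |V_c| for every c ∈ C and ‖k⃗‖₁ = Σ_{c∈C} k_c ≥ 1. Let OPT be the maximum of d(T) over all T ⊆ V feasible for Dal k⃗ S (i.e., |T_c| ≥ k_c for all c), and let γ ∈ [0,1]. If S ⊆ V satisfies |S| ≥ ‖k⃗‖₁ and d(S) ≥ γ · max{ d(T) : T ⊆ V, |T| ≥ ‖k⃗‖₁ }, then there exists S' with S ⊆ S' ⊆ V such that |S'_c| ≥ k_c for every c ∈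 C and d(S') ≥ (γ/2) · OPT. -/
/-!
Top up every color class of `S` to its demand using vertices outside `S`. This adds at most
`‖k⃗‖₁ ≤ |S|` vertices and no edge is lost, so the density drops by at most a factor `2`.
Every feasible set for the colored problem has at least `‖k⃗‖₁` vertices, hence the colored
optimum is at most the uncolored one, and `S` is already within `γ` of the latter.
-/

open Finset

section Density

variable {V : Type*} [Fintype V] [DecidableEq V] (G : SimpleGraph V) [DecidableRel G.Adj]

lemma edgesIn_mono {S T : Finset V} (h : S ⊆ T) : edgesIn G S ⊆ edgesIn G T :=
  fun _ he => mem_filter.mpr ⟨(mem_filter.mp he).1, fun v hv => h ((mem_filter.mp he).2 v hv)⟩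

lemma density_le_card_edgeFinset (S : Finset V) : density G S ≤ G.edgeFinset.card := by
  rcases S.eq_empty_or_nonempty with rfl | hS
  · simp [density]
  · rw [density, div_le_iff₀ (by exact_mod_cast hS.card_pos)]
    calc ((edgesIn G S).card : ℝ) ≤ G.edgeFinset.card := by
          exact_mod_cast card_le_card (filter_subset _ _)
      _ ≤ G.edgeFinset.card * S.card :=
          le_mul_of_one_le_right (Nat.cast_nonneg _) (by exact_mod_cast hS.card_pos)

lemma density_div_two_le_of_subset {S T : Finset V} (hST : S ⊆ T) (hcard : T.card ≤ 2 * S.card) :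
    density G S / 2 ≤ density G T := by
  rcases T.eq_empty_or_nonempty with rfl | hT
  · simp [subset_empty.mp hST, density]
  · rw [density, density, div_div]
    exact div_le_div₀ (Nat.cast_nonneg _) (by exact_mod_cast card_le_card (edgesIn_mono G hST))
      (by exact_mod_cast hT.card_pos) (by rw [mul_comm]; exact_mod_cast hcard)

end Density

section ColorClass

variable {V C : Type*} [DecidableEq V] [DecidableEq C] (ℓ : V → C)

lemma colorClass_mono {S T : Finset V} (h : S ⊆ T) (c : C) :
    colorClass ℓ S c ⊆ colorClass ℓ T c :=
  filter_subset_filter _ h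

lemma card_colorClass_add_card_colorClass_compl [Fintype V] (S : Finset V) (c : C) :
    (colorClass ℓ S c).card + (colorClass ℓ Sᶜ c).card = (colorClass ℓ univ c).card := by
  simp only [colorClass]
  rw [← card_union_of_disjoint (disjoint_filter_filter disjoint_compl_right), ← filter_union,
    union_compl]

lemma sum_le_card_of_le_card_colorClass [Fintype C] {k : C → ℕ} {T : Finset V}
    (hT : ∀ c, k c ≤ (colorClass ℓ T c).card) : ∑ c, k c ≤ T.card := by
  rw [card_eq_sum_card_fiberwise fun v _ => mem_univ (ℓ v)]
  exact sum_le_sum fun c _ => hT c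

theorem exists_superset_le_card_colorClass [Fintype V] [Fintype C] {k : C → ℕ}
    (hk : ∀ c, k c ≤ (colorClass ℓ univ c).card) (S : Finset V) :
    ∃ S', S ⊆ S' ∧ (∀ c, k c ≤ (colorClass ℓ S' c).card) ∧ S'.card ≤ S.card + ∑ c, k c := by
  have hA : ∀ c, ∃ A ⊆ colorClass ℓ Sᶜ c, A.card = k c - (colorClass ℓ S c).card := fun c =>
    exists_subset_card_eq (by
      have := card_colorClass_add_card_colorClass_compl ℓ S c
      have := hk c
      omega)
  choose A hAsub hAcard using hA
  refine ⟨S ∪ univ.biUnion A, subset_union_left, fun c => ?_, ?_⟩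
  · have hdisj : Disjoint (colorClass ℓ S c) (A c) :=
      disjoint_of_subset_right (hAsub c) (disjoint_filter_filter disjoint_compl_right)
    have hAc : A c ⊆ colorClass ℓ (S ∪ univ.biUnion A) c := fun v hv =>
      mem_filter.mpr ⟨mem_union_right _ (mem_biUnion.mpr ⟨c, mem_univ c, hv⟩),
        (mem_filter.mp (hAsub c hv)).2⟩
    have := card_le_card (union_subset (colorClass_mono ℓ subset_union_left c) hAc)
    rw [card_union_of_disjoint hdisj, hAcard c] at this
    omega
  · calc (S ∪ univ.biUnion A).card ≤ S.card + (univ.biUnion A).card := card_union_le _ _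
      _ ≤ S.card + ∑ c, (A c).card := by gcongr; exact card_biUnion_le
      _ ≤ S.card + ∑ c, k c := by gcongr with c; rw [hAcard c]; exact Nat.sub_le _ _

variable {ℓ} in
lemma sSup_density_feasible_le [Fintype V] [Fintype C] (G : SimpleGraph V) [DecidableRel G.Adj]
    {k : C → ℕ} (hk : ∀ c, k c ≤ (colorClass ℓ univ c).card) :
    sSup {x : ℝ | ∃ T : Finset V, (∀ c, k c ≤ (colorClass ℓ T c).card) ∧ density G T = x} ≤
      sSup {x : ℝ | ∃ T : Finset V, ∑ c, k c ≤ T.card ∧ density G T = x} := by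
  refine csSup_le_csSup ⟨G.edgeFinset.card, ?_⟩ ⟨density G univ, univ, hk, rfl⟩ ?_
  · rintro _ ⟨T, -, rfl⟩
    exact density_le_card_edgeFinset G T
  · rintro _ ⟨T, hT, rfl⟩
    exact ⟨T, sum_le_card_of_le_card_colorClass ℓ hT, rfl⟩

end ColorClass

theorem stmt2_general {V C : Type*} [Fintype V] [DecidableEq V] [Fintype C] [DecidableEq C]
    (G : SimpleGraph V) [DecidableRel G.Adj] (ℓ : V → C) (k : C → ℕ)
    (hk : ∀ c : C, k c ≤ (colorClass ℓ Finset.univ c).card)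
    (γ : ℝ) (hγ0 : 0 ≤ γ)
    (S : Finset V) (hScard : ∑ c : C, k c ≤ S.card)
    (hSdens : γ * sSup {x : ℝ | ∃ T : Finset V, ∑ c : C, k c ≤ T.card ∧ density G T = x}
      ≤ density G S) :
    ∃ S' : Finset V, S ⊆ S' ∧ (∀ c : C, k c ≤ (colorClass ℓ S' c).card) ∧
      (γ / 2) * sSup {x : ℝ | ∃ T : Finset V, (∀ c : C, k c ≤ (colorClass ℓ T c).card) ∧
        density G T = x} ≤ density G S' := by
  obtain ⟨S', hSS', hS'color, hS'card⟩ := exists_superset_le_card_colorClass ℓ hk S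
  refine ⟨S', hSS', hS'color, ?_⟩
  calc (γ / 2) * sSup _
      ≤ (γ / 2) * sSup {x : ℝ | ∃ T : Finset V, ∑ c, k c ≤ T.card ∧ density G T = x} :=
        mul_le_mul_of_nonneg_left (sSup_density_feasible_le G hk) (by linarith)
    _ ≤ density G S / 2 := by linarith
    _ ≤ density G S' := density_div_two_le_of_subset G hSS' (by omega)

/-- Any `γ`-approximate solution to DalkS with `k = ‖k⃗‖₁` can be extended to a feasible
`(γ/2)`-approximate solution of Dal`k⃗`S. -/
theorem stmt2 {V C : Type*} [Fintype V] [DecidableEq V] [Fintype C] [DecidableEq C]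
    (G : SimpleGraph V) [DecidableRel G.Adj] (ℓ : V → C) (k : C → ℕ)
    (hk : ∀ c : C, k c ≤ (colorClass ℓ Finset.univ c).card) (hk1 : 1 ≤ ∑ c : C, k c)
    (γ : ℝ) (hγ0 : 0 ≤ γ) (hγ1 : γ ≤ 1)
    (S : Finset V) (hScard : ∑ c : C, k c ≤ S.card)
    (hSdens : γ * sSup {x : ℝ | ∃ T : Finset V, ∑ c : C, k c ≤ T.card ∧ density G T = x}
      ≤ density G S) :
    ∃ S' : Finset V, S ⊆ S' ∧ (∀ c : C, k c ≤ (colorClass ℓ S' c).card) ∧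
      (γ / 2) * sSup {x : ℝ | ∃ T : Finset V, (∀ c : C, k c ≤ (colorClass ℓ T c).card) ∧
        density G T = x} ≤ density G S' :=
  stmt2_general G ℓ k hk γ hγ0 S hScard hSdens
end

section
/- Let G = (V, E) be a finite simple undirected graph with n = |V|, ℓ : V → C a coloring, α a real number with 1/|C| ≤ α ≤ 1, and γ ∈ [0,1]. Assume α(V) ≤ α, and let OPT = max{ d(T) : ∅ ≠ T ⊆ V, α(T) ≤ α }. If S ⊆ V satisfies |S| ≥ ⌈1/α⌉ and d(S) ≥ γ · max{ d(T) : T ⊆ V, |T| ≥ ⌈1/α⌉ }, then there exists T with S ⊆ T ⊆ V such that α(T) ≤ α and d(T) ≥ (γ/|C|) · OPT. (Indeed, α ≥ 1/|C| implies ⌈1/α⌉ ≤ |C|.) -/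
open Finset

/-!
Let `m = c_max(S)`. Keep, for every color `c`, all of `S_c` and fill it up with further nodes of
`V_c` until it has `min(|V_c|, m)` nodes. The resulting `T ⊇ S` has `c_max(T) ≤ m` and
`m · |V| = ∑_c m |V_c| ≤ ∑_c min(|V_c|, m) · c_max(V) = |T| · c_max(V)`, so
`α(T) ≤ m / |T| ≤ α(V) ≤ α`; moreover `|T| ≤ |C| · m ≤ |C| · |S|`, so `d(T) ≥ d(S) / |C|`.
Finally every feasible set has `α · |T| ≥ c_max(T) ≥ 1`, i.e. `|T| ≥ ⌈1/α⌉`, hence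
`γ · OPT ≤ γ · max{d(T) : |T| ≥ ⌈1/α⌉} ≤ d(S)`.
-/

lemma Nat.ceil_one_div_le {α : ℝ} {k : ℕ} (hk : 0 < k) (h : 1 / (k : ℝ) ≤ α) :
    ⌈1 / α⌉₊ ≤ k := by
  have hk' : (0 : ℝ) < k := by exact_mod_cast hk
  have hα : 0 < α := (one_div_pos.2 hk').trans_le h
  exact Nat.ceil_le.2 ((one_div_le hα hk').2 h)

lemma Nat.mul_le_min_mul {a m M : ℕ} (ha : a ≤ M) (hm : m ≤ M) : m * a ≤ min a m * M := by
  rcases le_total a m with h | h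
  · rw [min_eq_left h, Nat.mul_comm m]
    exact Nat.mul_le_mul_left a hm
  · rw [min_eq_right h]
    exact Nat.mul_le_mul_left m ha

section Coloring

variable {V C : Type*} [DecidableEq V] [Fintype C] [DecidableEq C] (ℓ : V → C)

lemma card_colorClass_le_cmax (S : Finset V) (c : C) : #(colorClass ℓ S c) ≤ cmax ℓ S :=
  Finset.le_sup (f := fun c => #(colorClass ℓ S c)) (mem_univ c)

lemma cmax_le_card (S : Finset V) : cmax ℓ S ≤ #S :=
  Finset.sup_le fun _ _ => card_filter_le _ _

lemma cmax_mono {S T : Finset V} (h : S ⊆ T) : cmax ℓ S ≤ cmax ℓ T :=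
  Finset.sup_le fun c _ =>
    (card_le_card (filter_subset_filter _ h)).trans (card_colorClass_le_cmax ℓ T c)

lemma one_le_cmax {S : Finset V} (hS : S.Nonempty) : 1 ≤ cmax ℓ S := by
  obtain ⟨v, hv⟩ := hS
  have hv' : v ∈ colorClass ℓ S (ℓ v) := mem_filter.2 ⟨hv, rfl⟩
  exact (card_pos.2 ⟨v, hv'⟩).trans_le (card_colorClass_le_cmax ℓ S (ℓ v))

lemma card_eq_sum_card_colorClass (S : Finset V) : #S = ∑ c, #(colorClass ℓ S c) :=
  card_eq_sum_card_fiberwise fun v _ => mem_univ (ℓ v)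

lemma alphaOf_le_alphaOf_of_cmax_mul_card_le {T U : Finset V} (hTU : T ⊆ U)
    (h : cmax ℓ T * #U ≤ #T * cmax ℓ U) : alphaOf ℓ T ≤ alphaOf ℓ U := by
  rcases T.eq_empty_or_nonempty with rfl | hT
  · simp only [alphaOf, card_empty, Nat.cast_zero, div_zero]
    positivity
  have hT' : (0 : ℝ) < #T := by exact_mod_cast hT.card_pos
  have hU' : (0 : ℝ) < #U := by exact_mod_cast (hT.mono hTU).card_pos
  rw [alphaOf, alphaOf, div_le_div_iff₀ hT' hU', mul_comm (cmax ℓ U : ℝ)]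
  exact_mod_cast h

lemma ceil_one_div_le_card_of_alphaOf_le {S : Finset V} (hS : S.Nonempty) {α : ℝ}
    (h : alphaOf ℓ S ≤ α) : ⌈1 / α⌉₊ ≤ #S := by
  have hS' : (0 : ℝ) < #S := by exact_mod_cast hS.card_pos
  have hone : (1 : ℝ) ≤ #S * α := by
    rw [alphaOf, div_le_iff₀ hS'] at h
    rw [mul_comm]
    exact le_trans (by exact_mod_cast one_le_cmax ℓ hS) h
  have hα : 0 < α := pos_of_mul_pos_right (one_pos.trans_le hone) hS'.le
  exact Nat.ceil_le.2 ((div_le_iff₀ hα).2 hone)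

lemma exists_superset_card_colorClass_eq_min {S U : Finset V} (hSU : S ⊆ U) {m : ℕ}
    (hm : cmax ℓ S ≤ m) :
    ∃ T, S ⊆ T ∧ T ⊆ U ∧ ∀ c, #(colorClass ℓ T c) = min #(colorClass ℓ U c) m := by
  have hB : ∀ c, ∃ B, colorClass ℓ S c ⊆ B ∧ B ⊆ colorClass ℓ U c ∧
      #B = min #(colorClass ℓ U c) m := fun c =>
    exists_subsuperset_card_eq (filter_subset_filter _ hSU)
      (le_min (card_le_card (filter_subset_filter _ hSU))
        ((card_colorClass_le_cmax ℓ S c).trans hm))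
      (min_le_left _ _)
  choose B hSB hBU hBcard using hB
  have hBcolor : ∀ {c v}, v ∈ B c → v ∈ U ∧ ℓ v = c := fun hv => mem_filter.1 (hBU _ hv)
  refine ⟨U.filter fun v => v ∈ B (ℓ v), fun v hv => ?_, filter_subset _ _, fun c => ?_⟩
  · exact mem_filter.2 ⟨hSU hv, hSB (ℓ v) (mem_filter.2 ⟨hv, rfl⟩)⟩
  · rw [← hBcard c]
    congr 1
    ext v
    simp only [colorClass, mem_filter]
    constructor
    · rintro ⟨⟨-, hv⟩, rfl⟩
      exact hv
    · intro hv
      obtain ⟨hvU, rfl⟩ := hBcolor hv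
      exact ⟨⟨hvU, hv⟩, rfl⟩

theorem exists_superset_alphaOf_le_card_le {S U : Finset V} (hSU : S ⊆ U) :
    ∃ T, S ⊆ T ∧ alphaOf ℓ T ≤ alphaOf ℓ U ∧ #T ≤ Fintype.card C * #S := by
  set m := cmax ℓ S
  obtain ⟨T, hST, hTU, hT⟩ := exists_superset_card_colorClass_eq_min ℓ hSU le_rfl
  have hcard : #T = ∑ c, min #(colorClass ℓ U c) m := by
    rw [card_eq_sum_card_colorClass ℓ T]
    exact sum_congr rfl fun c _ => hT c
  have hcmax : cmax ℓ T ≤ m := Finset.sup_le fun c _ => (hT c).trans_le (min_le_right _ _)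
  refine ⟨T, hST, alphaOf_le_alphaOf_of_cmax_mul_card_le ℓ hTU ?_, ?_⟩
  · calc cmax ℓ T * #U ≤ m * #U := Nat.mul_le_mul_right _ hcmax
      _ = ∑ c, m * #(colorClass ℓ U c) := by rw [card_eq_sum_card_colorClass ℓ U, mul_sum]
      _ ≤ ∑ c, min #(colorClass ℓ U c) m * cmax ℓ U := sum_le_sum fun c _ =>
          Nat.mul_le_min_mul (card_colorClass_le_cmax ℓ U c) (cmax_mono ℓ hSU)
      _ = #T * cmax ℓ U := by rw [hcard, sum_mul]
  · calc #T ≤ ∑ _c : C, m := hcard ▸ sum_le_sum fun c _ => min_le_right _ _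
      _ = Fintype.card C * m := by rw [sum_const, smul_eq_mul, card_univ]
      _ ≤ Fintype.card C * #S := Nat.mul_le_mul_left _ (cmax_le_card ℓ S)

end Coloring

section Density

variable {V : Type*} [Fintype V] [DecidableEq V] (G : SimpleGraph V) [DecidableRel G.Adj]

lemma density_nonneg (S : Finset V) : 0 ≤ density G S := by
  unfold density
  positivity

lemma density_div_le_density {S T : Finset V} (hST : S ⊆ T) {k : ℕ} (hk : #T ≤ k * #S) :
    density G S / k ≤ density G T := by
  rcases S.eq_empty_or_nonempty with rfl | hS
  · simpa only [density, card_empty, Nat.cast_zero, div_zero, zero_div] using density_nonneg G T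
  have hT : (0 : ℝ) < #T := by exact_mod_cast (hS.mono hST).card_pos
  rw [density, density, div_div]
  refine div_le_div₀ (by positivity) (by exact_mod_cast card_le_card (edgesIn_mono G hST)) hT ?_
  rw [mul_comm]
  exact_mod_cast hk

lemma sSup_density_diverse_le_sSup_density_card_ge {C : Type*} [Fintype C] [DecidableEq C]
    (ℓ : V → C) (α : ℝ) :
    sSup {x : ℝ | ∃ T : Finset V, T.Nonempty ∧ alphaOf ℓ T ≤ α ∧ density G T = x} ≤
      sSup {x : ℝ | ∃ T : Finset V, ⌈1 / α⌉₊ ≤ #T ∧ density G T = x} := by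
  rcases Set.eq_empty_or_nonempty
    {x : ℝ | ∃ T : Finset V, T.Nonempty ∧ alphaOf ℓ T ≤ α ∧ density G T = x} with hF | hF
  · rw [hF, Real.sSup_empty]
    exact Real.sSup_nonneg (by rintro _ ⟨T, -, rfl⟩; exact density_nonneg G T)
  refine csSup_le_csSup ((Set.finite_range (density G)).bddAbove.mono ?_) hF ?_
  · rintro _ ⟨T, -, rfl⟩
    exact ⟨T, rfl⟩
  · rintro _ ⟨T, hT, hα, rfl⟩
    exact ⟨T, ceil_one_div_le_card_of_alphaOf_le ℓ hT hα, rfl⟩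

end Density

theorem stmt7_general {V C : Type*} [Fintype V] [DecidableEq V] [Fintype C] [DecidableEq C]
    (G : SimpleGraph V) [DecidableRel G.Adj] (ℓ : V → C) (α : ℝ)
    (hα₁ : 1 / (Fintype.card C : ℝ) ≤ α)
    (γ : ℝ) (hγ0 : 0 ≤ γ)
    (hV : alphaOf ℓ (Finset.univ : Finset V) ≤ α)
    (S : Finset V) (hScard : ⌈1 / α⌉₊ ≤ S.card)
    (hSdens : γ * sSup {x : ℝ | ∃ T : Finset V, ⌈1 / α⌉₊ ≤ T.card ∧ density G T = x}
      ≤ density G S) :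
    (∃ T : Finset V, S ⊆ T ∧ alphaOf ℓ T ≤ α ∧
      (γ / Fintype.card C) *
        sSup {x : ℝ | ∃ T' : Finset V, T'.Nonempty ∧ alphaOf ℓ T' ≤ α ∧ density G T' = x}
      ≤ density G T) ∧ ⌈1 / α⌉₊ ≤ Fintype.card C := by
  have hOPT := sSup_density_diverse_le_sSup_density_card_ge G ℓ α
  set OPT := sSup {x : ℝ | ∃ T' : Finset V, T'.Nonempty ∧ alphaOf ℓ T' ≤ α ∧ density G T' = x}
  set DalkS := sSup {x : ℝ | ∃ T : Finset V, ⌈1 / α⌉₊ ≤ #T ∧ density G T = x}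
  obtain ⟨T, hST, hαT, hTS⟩ := exists_superset_alphaOf_le_card_le ℓ (subset_univ S)
  refine ⟨⟨T, hST, hαT.trans hV, ?_⟩, ?_⟩
  · calc γ / Fintype.card C * OPT
        ≤ γ / Fintype.card C * DalkS := mul_le_mul_of_nonneg_left hOPT (by positivity)
      _ = γ * DalkS / Fintype.card C := div_mul_eq_mul_div _ _ _
      _ ≤ density G S / Fintype.card C := by gcongr
      _ ≤ density G T := density_div_le_density G hST hTS
  · rcases isEmpty_or_nonempty V with hVe | hVn
    · rw [eq_empty_of_isEmpty S, card_empty] at hScard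
      exact hScard.trans (Nat.zero_le _)
    · exact Nat.ceil_one_div_le (Fintype.card_pos_iff.2 ⟨ℓ hVn.some⟩) hα₁

/-- `(γ/|C|)`-approximation: a `γ`-approximate solution to DalkS with `k = ⌈1/α⌉`
extends to a diverse set `T` with `d(T) ≥ (γ/|C|) · OPT`; indeed `α ≥ 1/|C|` implies
`⌈1/α⌉ ≤ |C|`. -/
theorem stmt7 {V C : Type*} [Fintype V] [DecidableEq V] [Fintype C] [DecidableEq C]
    (G : SimpleGraph V) [DecidableRel G.Adj] (ℓ : V → C) (α : ℝ)
    (hα₁ : 1 / (Fintype.card C : ℝ) ≤ α) (hα₂ : α ≤ 1)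
    (γ : ℝ) (hγ0 : 0 ≤ γ) (hγ1 : γ ≤ 1)
    (hV : alphaOf ℓ (Finset.univ : Finset V) ≤ α)
    (S : Finset V) (hScard : ⌈1 / α⌉₊ ≤ S.card)
    (hSdens : γ * sSup {x : ℝ | ∃ T : Finset V, ⌈1 / α⌉₊ ≤ T.card ∧ density G T = x}
      ≤ density G S) :
    (∃ T : Finset V, S ⊆ T ∧ alphaOf ℓ T ≤ α ∧
      (γ / Fintype.card C) *
        sSup {x : ℝ | ∃ T' : Finset V, T'.Nonempty ∧ alphaOf ℓ T' ≤ α ∧ density G T' = x}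
      ≤ density G T) ∧ ⌈1 / α⌉₊ ≤ Fintype.card C :=
  stmt7_general G ℓ α hα₁ γ hγ0 hV S hScard hSdens
end
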